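/- arXiv:2502.02898 — 2 statements merged into one kernel-verified Lean document; each statement's English description precedes it below -/
import Mathlib

section
/- Let f be in the class BT_B with Taylor coefficients a_n, and let γ_3 = (1/2)(a_4 − a_2·a_3 + a_2³/3) be its third logarithmic coefficient. Then |γ_3| ≤ 1/16. -/
open Complex Metric

/-- Principal branch of the square root: `w^(1/2) = exp((1/2) * Log w)`. -/
noncomputable def psqrt (w : ℂ) : ℂ := Complex.exp ((1/2 : ℂ) * Complex.log w)

/-- The `n`-th Taylor coefficient of `f` at `0`, i.e. `f^(n)(0)/n!`. -/
noncomputable def tCoeff (f : ℂ → ℂ) (n : ℕ) : ℂ := iteratedDeriv n f 0 / n.factorial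

/-- The class `BT_B` of bounded turning functions associated with the bean-shaped domain:
`f` is analytic on the unit disk, `f 0 = 0`, `f' 0 = 1`, `f` injective on the disk,
and `f'(z) = (1 + tanh (ω z))^(1/2)` for a Schwarz function `ω`. -/
def IsBTB (f : ℂ → ℂ) : Prop :=
  AnalyticOnNhd ℂ f (ball 0 1) ∧ f 0 = 0 ∧ deriv f 0 = 1 ∧
  Set.InjOn f (ball 0 1) ∧
  ∃ ω : ℂ → ℂ, AnalyticOnNhd ℂ ω (ball 0 1) ∧ ω 0 = 0 ∧
    (∀ z ∈ ball (0:ℂ) 1, ‖ω z‖ < 1) ∧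
    (∀ z ∈ ball (0:ℂ) 1, deriv f z = psqrt (1 + Complex.tanh (ω z)))

/-!
Squaring `f' = (1 + tanh ω)^(1/2)` gives `f'² (e^{2ω} + 1) = 2 e^{2ω}`, an identity between
functions analytic at `0`. Comparing Taylor coefficients up to order three (Leibniz rule)
expresses `γ₃` through the coefficients `cₖ` of `ω` as `c₃/16 - 5 c₁ c₂/96 - c₁³/192`.
A Schwarz function satisfies `|c₁| ≤ 1` and `|c₃| ≤ 1 - |c₁|² - |c₂|²/(1 + |c₁|)`. The latter
comes from iterating the Schur step (divide by `z`, then compose with the disc automorphism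
moving the value at `0` to `0`), which turns a Schwarz function into a Schwarz function, and
applying the Schwarz lemma `|c₁| ≤ 1` at the end. Maximising over `|c₂|` gives `1/16`.
-/

open Filter Finset Set Topology ComplexConjugate

section TaylorCoeff

variable {f g : ℂ → ℂ}

lemma tCoeff_zero (f : ℂ → ℂ) : tCoeff f 0 = f 0 := by
  simp [tCoeff]

lemma tCoeff_one (f : ℂ → ℂ) : tCoeff f 1 = deriv f 0 := by
  simp [tCoeff]

lemma tCoeff_deriv (f : ℂ → ℂ) (n : ℕ) : tCoeff (deriv f) n = (n + 1) * tCoeff f (n + 1) := by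
  simp only [tCoeff, iteratedDeriv_succ', Nat.factorial_succ]
  push_cast
  field_simp

lemma Filter.EventuallyEq.tCoeff_eq (h : f =ᶠ[𝓝 0] g) (n : ℕ) : tCoeff f n = tCoeff g n := by
  rw [tCoeff, tCoeff, h.iteratedDeriv_eq n]

lemma tCoeff_const_mul (c : ℂ) (f : ℂ → ℂ) (n : ℕ) :
    tCoeff (fun z => c * f z) n = c * tCoeff f n := by
  simp [tCoeff, mul_div_assoc]

lemma tCoeff_sub_const (f : ℂ → ℂ) (c : ℂ) {n : ℕ} (hn : n ≠ 0) :
    tCoeff (fun z => f z - c) n = tCoeff f n := by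
  simp only [tCoeff, sub_eq_neg_add, iteratedDeriv_const_add (Nat.pos_of_ne_zero hn)]

lemma tCoeff_add (hf : AnalyticAt ℂ f 0) (hg : AnalyticAt ℂ g 0) (n : ℕ) :
    tCoeff (fun z => f z + g z) n = tCoeff f n + tCoeff g n := by
  rw [tCoeff, iteratedDeriv_fun_add hf.contDiffAt hg.contDiffAt, add_div, tCoeff, tCoeff]

lemma tCoeff_sub (hf : AnalyticAt ℂ f 0) (hg : AnalyticAt ℂ g 0) (n : ℕ) :
    tCoeff (fun z => f z - g z) n = tCoeff f n - tCoeff g n := by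
  rw [tCoeff, iteratedDeriv_fun_sub hf.contDiffAt hg.contDiffAt, sub_div, tCoeff, tCoeff]

lemma tCoeff_mul (hf : AnalyticAt ℂ f 0) (hg : AnalyticAt ℂ g 0) (n : ℕ) :
    tCoeff (fun z => f z * g z) n = ∑ i ∈ range (n + 1), tCoeff f i * tCoeff g (n - i) := by
  rw [tCoeff, iteratedDeriv_fun_mul hf.contDiffAt hg.contDiffAt, sum_div]
  refine sum_congr rfl fun i hi => ?_
  have hi : i ≤ n := mem_range_succ_iff.mp hi
  have hchoose : (n.choose i : ℂ) ≠ 0 := Nat.cast_ne_zero.2 (Nat.choose_pos hi).ne'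
  rw [tCoeff, tCoeff, ← Nat.choose_mul_factorial_mul_factorial hi]
  push_cast
  field_simp

lemma AnalyticAt.dslope {c : ℂ} (hf : AnalyticAt ℂ f c) : AnalyticAt ℂ (dslope f c) c :=
  let ⟨_, hp⟩ := hf
  ⟨_, hp.has_fpower_series_dslope_fslope⟩

lemma tCoeff_dslope (hf : AnalyticAt ℂ f 0) (n : ℕ) :
    tCoeff (dslope f 0) n = tCoeff f (n + 1) := by
  have h : (fun z => f z - f 0) = fun z => z * dslope f 0 z := by
    ext z
    simpa using (sub_smul_dslope f 0 z).symm
  rw [← tCoeff_sub_const f (f 0) n.succ_ne_zero, h,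
    tCoeff_mul (f := fun z => z) analyticAt_id hf.dslope, sum_range_succ']
  simp [tCoeff, iteratedDeriv_fun_id_zero, ite_div, ite_mul]

end TaylorCoeff

lemma one_sub_conj_mul_ne_zero {a w : ℂ} (ha : ‖a‖ ≤ 1) (hw : ‖w‖ < 1) : 1 - conj a * w ≠ 0 := by
  refine sub_ne_zero.2 fun h => ?_
  have : ‖conj a * w‖ < 1 := by
    rw [norm_mul, RCLike.norm_conj]
    nlinarith [norm_nonneg a, norm_nonneg w]
  rw [← h, norm_one] at this
  exact this.false

lemma norm_sub_div_one_sub_conj_mul_lt_one {a w : ℂ} (ha : ‖a‖ < 1) (hw : ‖w‖ < 1) :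
    ‖(w - a) / (1 - conj a * w)‖ < 1 := by
  have hden := one_sub_conj_mul_ne_zero ha.le hw
  rw [norm_div, div_lt_one (norm_pos_iff.2 hden), ← sq_lt_sq₀ (norm_nonneg _) (norm_nonneg _),
    ← normSq_eq_norm_sq, ← normSq_eq_norm_sq]
  have hid : normSq (1 - conj a * w) - normSq (w - a) = (1 - normSq a) * (1 - normSq w) := by
    simp only [normSq_apply, mul_re, mul_im, sub_re, sub_im, one_re, one_im, conj_re, conj_im]
    ring
  have ha' : normSq a < 1 := by rw [normSq_eq_norm_sq]; nlinarith [norm_nonneg a]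
  have hw' : normSq w < 1 := by rw [normSq_eq_norm_sq]; nlinarith [norm_nonneg w]
  nlinarith [mul_pos (sub_pos.2 ha') (sub_pos.2 hw')]

structure IsSchwarzFunction (σ : ℂ → ℂ) : Prop where
  differentiableOn : DifferentiableOn ℂ σ (ball 0 1)
  map_zero : σ 0 = 0
  mapsTo : MapsTo σ (ball 0 1) (ball 0 1)

namespace IsSchwarzFunction

variable {σ : ℂ → ℂ}

lemma mapsTo_closedBall (hσ : IsSchwarzFunction σ) :
    MapsTo σ (ball 0 1) (closedBall (σ 0) 1) := by
  rw [hσ.map_zero]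
  exact hσ.mapsTo.mono_right ball_subset_closedBall

lemma norm_tCoeff_one_le (hσ : IsSchwarzFunction σ) : ‖tCoeff σ 1‖ ≤ 1 := by
  simpa [tCoeff_one] using
    Complex.norm_deriv_le_div_of_mapsTo_ball hσ.differentiableOn hσ.mapsTo_closedBall one_pos

lemma differentiableOn_dslope (hσ : IsSchwarzFunction σ) :
    DifferentiableOn ℂ (dslope σ 0) (ball 0 1) :=
  (Complex.differentiableOn_dslope (ball_mem_nhds 0 one_pos)).2 hσ.differentiableOn

lemma mapsTo_dslope (hσ : IsSchwarzFunction σ) :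
    MapsTo (dslope σ 0) (ball 0 1) (closedBall 0 1) := fun z hz => by
  simpa using
    Complex.norm_dslope_le_div_of_mapsTo_ball hσ.differentiableOn hσ.mapsTo_closedBall hz

end IsSchwarzFunction

section SelfMapsOfDisc

variable {φ : ℂ → ℂ}

noncomputable def recenter (φ : ℂ → ℂ) : ℂ → ℂ :=
  fun z => (φ z - φ 0) / (1 - conj (φ 0) * φ z)

lemma isSchwarzFunction_recenter (hφ : DifferentiableOn ℂ φ (ball 0 1))
    (hφ1 : MapsTo φ (ball 0 1) (ball 0 1)) : IsSchwarzFunction (recenter φ) := by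
  have ha : ‖φ 0‖ < 1 := mem_ball_zero_iff.1 (hφ1 (mem_ball_self one_pos))
  have hden : ∀ z ∈ ball (0 : ℂ) 1, 1 - conj (φ 0) * φ z ≠ 0 := fun z hz =>
    one_sub_conj_mul_ne_zero ha.le (mem_ball_zero_iff.1 (hφ1 hz))
  refine ⟨(hφ.sub_const _).div ((hφ.const_mul _).const_sub 1) hden, by simp [recenter],
    fun z hz => ?_⟩
  exact mem_ball_zero_iff.2
    (norm_sub_div_one_sub_conj_mul_lt_one ha (mem_ball_zero_iff.1 (hφ1 hz)))

lemma tCoeff_recenter (hφ : DifferentiableOn ℂ φ (ball 0 1))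
    (hφ1 : MapsTo φ (ball 0 1) (ball 0 1)) {n : ℕ} (hn : n ≠ 0) :
    tCoeff (recenter φ) n
      - conj (φ 0) * ∑ i ∈ range (n + 1), tCoeff (recenter φ) i * tCoeff φ (n - i)
      = tCoeff φ n := by
  have hψ := isSchwarzFunction_recenter hφ hφ1
  have hφ0 : AnalyticAt ℂ φ 0 := hφ.analyticAt (ball_mem_nhds 0 one_pos)
  have hψ0 : AnalyticAt ℂ (recenter φ) 0 :=
    hψ.differentiableOn.analyticAt (ball_mem_nhds 0 one_pos)
  have hrel : (fun z => recenter φ z - conj (φ 0) * (recenter φ z * φ z)) =ᶠ[𝓝 0]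
      fun z => φ z - φ 0 := by
    filter_upwards [ball_mem_nhds (0 : ℂ) one_pos] with z hz
    have hden : 1 - conj (φ 0) * φ z ≠ 0 := one_sub_conj_mul_ne_zero
      (mem_ball_zero_iff.1 (hφ1 (mem_ball_self one_pos))).le (mem_ball_zero_iff.1 (hφ1 hz))
    have h : recenter φ z * (1 - conj (φ 0) * φ z) = φ z - φ 0 := div_mul_cancel₀ _ hden
    linear_combination h
  rw [← tCoeff_sub_const φ (φ 0) hn, ← hrel.tCoeff_eq, tCoeff_sub hψ0 (by fun_prop),
    tCoeff_const_mul, tCoeff_mul hψ0 hφ0]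

lemma tCoeff_eq_zero_or_mapsTo_ball (hφ : DifferentiableOn ℂ φ (ball 0 1))
    (hφ1 : MapsTo φ (ball 0 1) (closedBall 0 1)) :
    (‖tCoeff φ 0‖ = 1 ∧ ∀ n ≠ 0, tCoeff φ n = 0) ∨ MapsTo φ (ball 0 1) (ball 0 1) := by
  by_cases h : ∃ z₀ ∈ ball (0 : ℂ) 1, ‖φ z₀‖ = 1
  · obtain ⟨z₀, hz₀, hnorm⟩ := h
    have hconst : EqOn φ (fun _ => φ z₀) (ball 0 1) :=
      Complex.eqOn_of_isPreconnected_of_isMaxOn_norm (convex_ball 0 1).isPreconnected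
        isOpen_ball hφ hz₀ fun z hz => by simpa [hnorm] using hφ1 hz
    refine Or.inl ⟨by rw [tCoeff_zero, hconst (mem_ball_self one_pos), hnorm], fun n hn => ?_⟩
    rw [(eventuallyEq_of_mem (ball_mem_nhds 0 one_pos) hconst).tCoeff_eq, tCoeff,
      iteratedDeriv_const]
    simp [hn]
  · push Not at h
    exact Or.inr fun z hz =>
      mem_ball_zero_iff.2 ((mem_closedBall_zero_iff.1 (hφ1 hz)).lt_of_ne (h z hz))

lemma norm_tCoeff_one_le_of_mapsTo_closedBall (hφ : DifferentiableOn ℂ φ (ball 0 1))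
    (hφ1 : MapsTo φ (ball 0 1) (closedBall 0 1)) :
    ‖tCoeff φ 1‖ ≤ 1 - ‖tCoeff φ 0‖ ^ 2 := by
  rcases tCoeff_eq_zero_or_mapsTo_ball hφ hφ1 with ⟨h0, hcoeff⟩ | hball
  · simp [hcoeff 1 one_ne_zero, h0]
  have hψ := isSchwarzFunction_recenter hφ hball
  have ha : ‖tCoeff φ 0‖ ^ 2 ≤ 1 := by
    rw [tCoeff_zero, sq_le_one_iff₀ (norm_nonneg _)]
    exact (mem_ball_zero_iff.1 (hball (mem_ball_self one_pos))).le
  have h1 : tCoeff φ 1 = ((1 - ‖tCoeff φ 0‖ ^ 2 : ℝ) : ℂ) * tCoeff (recenter φ) 1 := by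
    rw [← tCoeff_recenter hφ hball one_ne_zero]
    simp only [sum_range_succ, range_one, sum_singleton, tCoeff_zero, hψ.map_zero, tsub_zero,
      zero_mul, tsub_self, zero_add, ofReal_sub, ofReal_one, ofReal_pow, ← conj_mul']
    ring
  rw [h1, norm_mul, Complex.norm_real, Real.norm_of_nonneg (sub_nonneg.2 ha)]
  exact mul_le_of_le_one_right (sub_nonneg.2 ha) hψ.norm_tCoeff_one_le

lemma IsSchwarzFunction.norm_tCoeff_two_le {σ : ℂ → ℂ} (hσ : IsSchwarzFunction σ) :
    ‖tCoeff σ 2‖ ≤ 1 - ‖tCoeff σ 1‖ ^ 2 := by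
  simpa only [tCoeff_dslope (hσ.differentiableOn.analyticAt (ball_mem_nhds 0 one_pos))] using
    norm_tCoeff_one_le_of_mapsTo_closedBall hσ.differentiableOn_dslope hσ.mapsTo_dslope

lemma norm_tCoeff_two_le_of_mapsTo_closedBall (hφ : DifferentiableOn ℂ φ (ball 0 1))
    (hφ1 : MapsTo φ (ball 0 1) (closedBall 0 1)) :
    ‖tCoeff φ 2‖ ≤ 1 - ‖tCoeff φ 0‖ ^ 2 - ‖tCoeff φ 1‖ ^ 2 / (1 + ‖tCoeff φ 0‖) := by
  rcases tCoeff_eq_zero_or_mapsTo_ball hφ hφ1 with ⟨h0, hcoeff⟩ | hball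
  · simp [hcoeff 1 one_ne_zero, hcoeff 2 two_ne_zero, h0]
  have hψ := isSchwarzFunction_recenter hφ hball
  set a := tCoeff φ 0 with ha_def
  set q₁ := tCoeff (recenter φ) 1
  set q₂ := tCoeff (recenter φ) 2
  have ha : ‖a‖ < 1 := by
    rw [ha_def, tCoeff_zero]; exact mem_ball_zero_iff.1 (hball (mem_ball_self one_pos))
  have hA : 0 < 1 - ‖a‖ ^ 2 := by nlinarith [norm_nonneg a]
  have hp₁ : tCoeff φ 1 = ((1 - ‖a‖ ^ 2 : ℝ) : ℂ) * q₁ := by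
    rw [← tCoeff_recenter hφ hball one_ne_zero]
    simp only [sum_range_succ, range_one, sum_singleton, tCoeff_zero, hψ.map_zero, tsub_zero,
      zero_mul, tsub_self, zero_add, ha_def, ofReal_sub, ofReal_one, ofReal_pow, ← conj_mul']
    ring
  have hp₂ : tCoeff φ 2 = ((1 - ‖a‖ ^ 2 : ℝ) : ℂ) * q₂ - conj a * q₁ * tCoeff φ 1 := by
    rw [← tCoeff_recenter hφ hball two_ne_zero]
    simp only [Nat.reduceAdd, sum_range_succ, range_one, sum_singleton, tCoeff_zero,
      hψ.map_zero, tsub_zero, zero_mul, Nat.add_one_sub_one, zero_add, tsub_self, ha_def,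
      ofReal_sub, ofReal_one, ofReal_pow, ← conj_mul']
    ring
  have hnp₁ : ‖tCoeff φ 1‖ = (1 - ‖a‖ ^ 2) * ‖q₁‖ := by
    rw [hp₁, norm_mul, Complex.norm_real, Real.norm_of_nonneg hA.le]
  have hnp₂ : ‖tCoeff φ 2‖ ≤ (1 - ‖a‖ ^ 2) * ‖q₂‖ + ‖a‖ * ‖q₁‖ * ‖tCoeff φ 1‖ := by
    rw [hp₂]
    refine (norm_sub_le _ _).trans_eq ?_
    rw [norm_mul, norm_mul, norm_mul, Complex.norm_real, Real.norm_of_nonneg hA.le,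
      RCLike.norm_conj]
  have hq₂ : ‖q₂‖ ≤ 1 - ‖q₁‖ ^ 2 := hψ.norm_tCoeff_two_le
  have hfrac : ‖tCoeff φ 1‖ ^ 2 / (1 + ‖a‖) = (1 - ‖a‖) * (1 - ‖a‖ ^ 2) * ‖q₁‖ ^ 2 := by
    rw [hnp₁, div_eq_iff (by positivity)]
    ring
  rw [hfrac]
  rw [hnp₁] at hnp₂
  nlinarith [norm_nonneg q₁]

lemma IsSchwarzFunction.norm_tCoeff_three_le {σ : ℂ → ℂ} (hσ : IsSchwarzFunction σ) :
    ‖tCoeff σ 3‖ ≤ 1 - ‖tCoeff σ 1‖ ^ 2 - ‖tCoeff σ 2‖ ^ 2 / (1 + ‖tCoeff σ 1‖) := by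
  simpa only [tCoeff_dslope (hσ.differentiableOn.analyticAt (ball_mem_nhds 0 one_pos))] using
    norm_tCoeff_two_le_of_mapsTo_closedBall hσ.differentiableOn_dslope hσ.mapsTo_dslope

end SelfMapsOfDisc

section PowerSeriesIdentities

variable {F g R ω : ℂ → ℂ}

lemma tCoeff_cexp (hg : AnalyticAt ℂ g 0) (hg0 : g 0 = 0) :
    tCoeff (fun z => exp (g z)) 1 = tCoeff g 1 ∧
    tCoeff (fun z => exp (g z)) 2 = tCoeff g 2 + tCoeff g 1 ^ 2 / 2 ∧
    tCoeff (fun z => exp (g z)) 3 = tCoeff g 3 + tCoeff g 1 * tCoeff g 2 + tCoeff g 1 ^ 3 / 6 := by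
  have hderiv : deriv (fun z => exp (g z)) =ᶠ[𝓝 0] fun z => deriv g z * exp (g z) := by
    filter_upwards [hg.eventually_analyticAt] with z hz
    rw [hz.differentiableAt.hasDerivAt.cexp.deriv, mul_comm]
  have hrec (n : ℕ) : (n + 1) * tCoeff (fun z => exp (g z)) (n + 1) =
      ∑ i ∈ range (n + 1), (i + 1) * tCoeff g (i + 1) * tCoeff (fun z => exp (g z)) (n - i) := by
    rw [← tCoeff_deriv, hderiv.tCoeff_eq, tCoeff_mul hg.deriv hg.cexp']
    simp only [tCoeff_deriv]
  have e0 : tCoeff (fun z => exp (g z)) 0 = 1 := by simp [tCoeff_zero, hg0]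
  have e1 := hrec 0
  have e2 := hrec 1
  have e3 := hrec 2
  simp only [sum_range_succ, sum_range_zero, e0] at e1 e2 e3
  norm_num at e1 e2 e3
  have h1 : tCoeff (fun z => exp (g z)) 1 = tCoeff g 1 := by linear_combination e1
  have h2 : tCoeff (fun z => exp (g z)) 2 = tCoeff g 2 + tCoeff g 1 ^ 2 / 2 := by
    linear_combination e2 / 2 + tCoeff g 1 / 2 * h1
  refine ⟨h1, h2, ?_⟩
  linear_combination e3 / 3 + tCoeff g 1 / 3 * h2 + 2 * tCoeff g 2 / 3 * h1

/-- The relation forces `R = 1 + tanh ω`, and `tanh x = x - x³/3 + O(x⁵)`. -/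
lemma tCoeff_of_mul_exp_two_mul_add_one (hR : AnalyticAt ℂ R 0) (hω : AnalyticAt ℂ ω 0)
    (hω0 : ω 0 = 0) (h : ∀ᶠ z in 𝓝 0, R z * (exp (2 * ω z) + 1) = 2 * exp (2 * ω z)) :
    tCoeff R 1 = tCoeff ω 1 ∧ tCoeff R 2 = tCoeff ω 2 ∧
    tCoeff R 3 = tCoeff ω 3 - tCoeff ω 1 ^ 3 / 3 := by
  have h2ω : AnalyticAt ℂ (fun z => 2 * ω z) 0 := by fun_prop
  have hH : AnalyticAt ℂ (fun z => exp (2 * ω z)) 0 := h2ω.cexp'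
  obtain ⟨hH1, hH2, hH3⟩ := tCoeff_cexp h2ω (by simp [hω0])
  simp only [tCoeff_const_mul] at hH1 hH2 hH3
  have hR0 : tCoeff R 0 = 1 := by
    have := h.self_of_nhds
    rw [hω0, mul_zero, exp_zero] at this
    rw [tCoeff_zero]; linear_combination this / 2
  have hH0 : tCoeff (fun z => exp (2 * ω z)) 0 = 1 := by simp [tCoeff_zero, hω0]
  have hrel : (fun z => R z * exp (2 * ω z) + R z) =ᶠ[𝓝 0] fun z => 2 * exp (2 * ω z) :=
    h.mono fun z hz => by linear_combination hz
  have e1 := hrel.tCoeff_eq 1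
  have e2 := hrel.tCoeff_eq 2
  have e3 := hrel.tCoeff_eq 3
  have hRH : AnalyticAt ℂ (fun z => R z * exp (2 * ω z)) 0 := by fun_prop
  simp only [tCoeff_add hRH hR, tCoeff_mul hR hH, tCoeff_const_mul, sum_range_succ,
    sum_range_zero, hR0, hH0, hH1, hH2, hH3] at e1 e2 e3
  norm_num at e1 e2 e3
  have h1 : tCoeff R 1 = tCoeff ω 1 := by linear_combination e1 / 2
  have h2 : tCoeff R 2 = tCoeff ω 2 := by linear_combination e2 / 2 - tCoeff ω 1 * h1
  refine ⟨h1, h2, ?_⟩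
  linear_combination e3 / 2 - (tCoeff ω 2 + tCoeff ω 1 ^ 2) * h1 - tCoeff ω 1 * h2

/-- The expansion `√(1 + x) = 1 + x/2 - x²/8 + x³/16 + …`. -/
lemma tCoeff_of_sq (hF : AnalyticAt ℂ F 0) (hF0 : F 0 = 1) :
    tCoeff F 1 = tCoeff (fun z => F z ^ 2) 1 / 2 ∧
    tCoeff F 2 = tCoeff (fun z => F z ^ 2) 2 / 2 - tCoeff (fun z => F z ^ 2) 1 ^ 2 / 8 ∧
    tCoeff F 3 = tCoeff (fun z => F z ^ 2) 3 / 2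
      - tCoeff (fun z => F z ^ 2) 1 * tCoeff (fun z => F z ^ 2) 2 / 4
      + tCoeff (fun z => F z ^ 2) 1 ^ 3 / 16 := by
  have hsq (n : ℕ) :
      tCoeff (fun z => F z ^ 2) n = ∑ i ∈ range (n + 1), tCoeff F i * tCoeff F (n - i) := by
    simp only [sq, tCoeff_mul hF hF]
  have e1 := hsq 1
  have e2 := hsq 2
  have e3 := hsq 3
  have hb0 : tCoeff F 0 = 1 := by rw [tCoeff_zero, hF0]
  norm_num [sum_range_succ, hb0] at e1 e2 e3
  set r₁ := tCoeff (fun z => F z ^ 2) 1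
  set r₂ := tCoeff (fun z => F z ^ 2) 2
  have h1 : tCoeff F 1 = r₁ / 2 := by linear_combination -e1 / 2
  have h2 : tCoeff F 2 = r₂ / 2 - r₁ ^ 2 / 8 := by
    linear_combination -e2 / 2 - (tCoeff F 1 + r₁ / 2) / 2 * h1
  refine ⟨h1, h2, ?_⟩
  linear_combination -e3 / 2 - tCoeff F 2 * h1 - r₁ / 2 * h2

end PowerSeriesIdentities

lemma exp_two_mul_add_one_ne_zero {u : ℂ} (hu : ‖u‖ < 1) : exp (2 * u) + 1 ≠ 0 := by
  intro h
  have h4 : exp (4 * u) = 1 := by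
    rw [show 4 * u = 2 * u + 2 * u by ring, exp_add, eq_neg_of_add_eq_zero_left h]
    ring
  obtain ⟨n, hn⟩ := exp_eq_one_iff.1 h4
  have hn0 : n ≠ 0 := by
    rintro rfl
    have hu0 : u = 0 := by simpa using hn
    simp [hu0] at h
  have hnorm : ‖4 * u‖ = 2 * Real.pi * |(n : ℝ)| := by
    rw [hn, norm_mul, norm_mul, norm_mul, norm_intCast, norm_I, Complex.norm_real,
      Real.norm_of_nonneg Real.pi_pos.le]
    norm_num
    ring
  have h1n : (1 : ℝ) ≤ |(n : ℝ)| := by exact_mod_cast Int.one_le_abs hn0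
  rw [norm_mul, show ‖(4 : ℂ)‖ = 4 by norm_num] at hnorm
  nlinarith [Real.pi_gt_three]

lemma one_add_tanh_mul_exp_two_mul_add_one {u : ℂ} (hu : exp (2 * u) + 1 ≠ 0) :
    (1 + tanh u) * (exp (2 * u) + 1) = 2 * exp (2 * u) := by
  have hE : exp (2 * u) = exp u * exp u := by rw [two_mul, exp_add]
  have hc : exp (2 * u) + 1 = 2 * exp u * cosh u := by
    rw [mul_assoc, mul_left_comm, two_cosh, hE, exp_neg]
    field_simp [exp_ne_zero]
  have hcosh : cosh u ≠ 0 := fun h0 => hu (by rw [hc, h0, mul_zero])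
  rw [tanh_eq_sinh_div_cosh, hc, hE, ← cosh_add_sinh]
  field_simp

lemma psqrt_sq {w : ℂ} (hw : w ≠ 0) : psqrt w ^ 2 = w := by
  rw [psqrt, ← exp_nat_mul, ← mul_assoc]
  norm_num
  exact exp_log hw

lemma psqrt_one_add_tanh_sq_mul {u : ℂ} (hu : ‖u‖ < 1) :
    psqrt (1 + tanh u) ^ 2 * (exp (2 * u) + 1) = 2 * exp (2 * u) := by
  have h := one_add_tanh_mul_exp_two_mul_add_one (exp_two_mul_add_one_ne_zero hu)
  have hne : 1 + tanh u ≠ 0 := by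
    rintro h0
    rw [h0, zero_mul] at h
    exact two_ne_zero (mul_eq_zero.1 h.symm |>.resolve_right (exp_ne_zero _))
  rw [psqrt_sq hne, h]

lemma norm_gamma3_formula_le {c₁ c₂ c₃ : ℂ} (h₁ : ‖c₁‖ ≤ 1)
    (h₃ : ‖c₃‖ ≤ 1 - ‖c₁‖ ^ 2 - ‖c₂‖ ^ 2 / (1 + ‖c₁‖)) :
    ‖c₃ / 16 - 5 * c₁ * c₂ / 96 - c₁ ^ 3 / 192‖ ≤ 1 / 16 := by
  have htri : ‖c₃ / 16 - 5 * c₁ * c₂ / 96 - c₁ ^ 3 / 192‖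
      ≤ ‖c₃‖ / 16 + 5 * ‖c₁‖ * ‖c₂‖ / 96 + ‖c₁‖ ^ 3 / 192 := by
    have h₁ := norm_sub_le (c₃ / 16) (5 * c₁ * c₂ / 96)
    have h₂ := norm_sub_le (c₃ / 16 - 5 * c₁ * c₂ / 96) (c₁ ^ 3 / 192)
    simp only [norm_div, norm_mul, norm_pow] at h₁ h₂ ⊢
    norm_num at h₁ h₂ ⊢
    linarith
  set x := ‖c₁‖
  set y := ‖c₂‖
  have hx : 0 ≤ x := norm_nonneg _
  have ht : y ^ 2 / (1 + x) * (1 + x) = y ^ 2 := div_mul_cancel₀ _ (by positivity)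
  have hx1 : 0 ≤ 1 + x := by linarith
  -- completing the square in `y`, what remains is `x² (1 + x) (119 - 37 x) ≥ 0`
  nlinarith [sq_nonneg (12 * y - 5 * x * (1 + x)),
    mul_nonneg (mul_nonneg (sq_nonneg x) hx1) (sub_nonneg.2 h₁), div_nonneg (sq_nonneg y) hx1]

theorem BTB_gamma3_bound (f : ℂ → ℂ) (hf : IsBTB f) :
    ‖(1/2) * (tCoeff f 4 - tCoeff f 2 * tCoeff f 3 + (tCoeff f 2)^3 / 3)‖ ≤ 1/16 := by
  obtain ⟨hfa, -, hf1, -, ω, hωa, hω0, hωlt, hfω⟩ := hf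
  have h0 : (0 : ℂ) ∈ ball (0 : ℂ) 1 := mem_ball_self one_pos
  have hω : IsSchwarzFunction ω :=
    ⟨hωa.differentiableOn, hω0, fun z hz => mem_ball_zero_iff.2 (hωlt z hz)⟩
  have hF : AnalyticAt ℂ (deriv f) 0 := (hfa 0 h0).deriv
  have hsq : ∀ᶠ z in 𝓝 0, deriv f z ^ 2 * (exp (2 * ω z) + 1) = 2 * exp (2 * ω z) := by
    filter_upwards [ball_mem_nhds (0 : ℂ) one_pos] with z hz
    rw [hfω z hz]
    exact psqrt_one_add_tanh_sq_mul (hωlt z hz)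
  obtain ⟨hr₁, hr₂, hr₃⟩ :=
    tCoeff_of_mul_exp_two_mul_add_one (R := fun z => deriv f z ^ 2) (hF.pow 2) (hωa 0 h0) hω0
      hsq
  obtain ⟨hb₁, hb₂, hb₃⟩ := tCoeff_of_sq hF hf1
  simp only [hr₁, hr₂, hr₃, tCoeff_deriv] at hb₁ hb₂ hb₃
  norm_num at hb₁ hb₂ hb₃
  set c₁ := tCoeff ω 1
  set c₂ := tCoeff ω 2
  set c₃ := tCoeff ω 3
  have ha₂ : tCoeff f 2 = c₁ / 4 := by linear_combination hb₁ / 2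
  have ha₃ : tCoeff f 3 = c₂ / 6 - c₁ ^ 2 / 24 := by linear_combination hb₂ / 3
  have ha₄ : tCoeff f 4 = c₃ / 8 - c₁ * c₂ / 16 - 5 * c₁ ^ 3 / 192 := by
    linear_combination hb₃ / 4
  have hγ : (1/2) * (tCoeff f 4 - tCoeff f 2 * tCoeff f 3 + (tCoeff f 2)^3 / 3) =
      c₃ / 16 - 5 * c₁ * c₂ / 96 - c₁ ^ 3 / 192 := by
    rw [ha₂, ha₃, ha₄]
    ring
  rw [hγ]
  exact norm_gamma3_formula_le hω.norm_tCoeff_one_le hω.norm_tCoeff_three_le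
end

section
/- Let f be in the class BT_B with Taylor coefficients a_n, and let Γ_1 = −a_2/2 be the first logarithmic coefficient of the inverse function of f. Then |Γ_1| ≤ 1/8. -/
open Complex Metric

/-! Differentiating `f' = (1 + tanh ∘ ω)^{1/2}` at `0`, where `ω 0 = 0`, `tanh' 0 = 1` and the
square root has derivative `1/2` at `1`, gives `2 a₂ = f''(0) = ω'(0) / 2`. Hence
`Γ₁ = -ω'(0) / 8`, and `|ω'(0)| ≤ 1` by the Schwarz lemma. -/

lemma Complex.hasDerivAt_tanh {z : ℂ} (hz : cosh z ≠ 0) :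
    HasDerivAt tanh (1 / cosh z ^ 2) z := by
  rw [show tanh = sinh / cosh from funext tanh_eq_sinh_div_cosh, ← cosh_sq_sub_sinh_sq z]
  exact ((hasDerivAt_sinh z).div (hasDerivAt_cosh z) hz).congr_deriv (by ring)

lemma hasDerivAt_psqrt {w : ℂ} (hw : w ∈ slitPlane) :
    HasDerivAt psqrt (psqrt w / (2 * w)) w := by
  have h : HasDerivAt psqrt _ w :=
    (hasDerivAt_exp _).comp w ((hasDerivAt_log hw).const_mul (1 / 2 : ℂ))
  exact h.congr_deriv (by rw [psqrt]; field_simp)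

lemma psqrt_one : psqrt 1 = 1 := by
  simp [psqrt]

lemma tCoeff_two (f : ℂ → ℂ) : tCoeff f 2 = deriv (deriv f) 0 / 2 := by
  simp [tCoeff, iteratedDeriv_succ]

lemma IsBTB.exists_tCoeff_two_eq {f : ℂ → ℂ} (hf : IsBTB f) :
    ∃ ω : ℂ → ℂ, AnalyticOnNhd ℂ ω (ball 0 1) ∧ ω 0 = 0 ∧
      (∀ z ∈ ball (0 : ℂ) 1, ‖ω z‖ < 1) ∧ tCoeff f 2 = deriv ω 0 / 4 := by
  obtain ⟨-, -, -, -, ω, hωa, hω0, hω1, hderiv⟩ := hf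
  refine ⟨ω, hωa, hω0, hω1, ?_⟩
  have h0 : (0 : ℂ) ∈ ball (0 : ℂ) 1 := mem_ball_self one_pos
  have hinner : HasDerivAt (fun z => 1 + tanh (ω z)) (deriv ω 0) 0 := by
    have htanh : HasDerivAt tanh 1 (ω 0) := by
      simpa [hω0] using Complex.hasDerivAt_tanh (z := ω 0) (by simp [hω0])
    simpa using ((htanh.comp 0 (hωa 0 h0).differentiableAt.hasDerivAt).const_add 1)
  have hsqrt : HasDerivAt psqrt (1 / 2) (1 + tanh (ω 0)) := by
    simpa [hω0, psqrt_one] using hasDerivAt_psqrt one_mem_slitPlane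
  have heq : deriv f =ᶠ[nhds 0] fun z => psqrt (1 + tanh (ω z)) :=
    Filter.eventually_of_mem (isOpen_ball.mem_nhds h0) hderiv
  have hcomp := hsqrt.comp 0 hinner
  rw [Function.comp_def] at hcomp
  rw [tCoeff_two, heq.deriv_eq, hcomp.deriv]
  ring

lemma IsBTB.norm_tCoeff_two_le {f : ℂ → ℂ} (hf : IsBTB f) : ‖tCoeff f 2‖ ≤ 1 / 4 := by
  obtain ⟨ω, hωa, hω0, hω1, ha₂⟩ := hf.exists_tCoeff_two_eq
  have hSchwarz : ‖deriv ω 0‖ ≤ 1 :=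
    norm_deriv_le_one_of_mapsTo_ball
      (fun z hz => (hωa z hz).differentiableAt.differentiableWithinAt)
      (fun z hz => by simpa [hω0] using (hω1 z hz).le) one_pos
  rw [ha₂, norm_div]
  norm_num
  linarith

theorem BTB_Gamma1_bound (f : ℂ → ℂ) (hf : IsBTB f) :
    ‖-(tCoeff f 2) / 2‖ ≤ 1/8 := by
  rw [norm_div, norm_neg]
  norm_num
  linarith [hf.norm_tCoeff_two_le]
end
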